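/- (Two-level variance decomposition of the gradient noise.) Let K ≥ 2, 1 ≤ L ≤ K, and for each k ∈ {1,…,K} let g_k : {1,…,N_k} → ℝ^M with N_k ≥ 2, mean a_k = (1/N_k) Σ_n g_k(n), batch size 1 ≤ B_k ≤ N_k, and epoch number E_k ≥ 1. Let ā = (1/K) Σ_k a_k. Then the two-level average — uniformly over subsets S ⊆ {1,…,K} of cardinality L and, independently for each k, uniformly over tuples of E_k batches of size B_k from {1,…,N_k} — of ‖(1/L) Σ_{ℓ∈S} m_ℓ − ā‖², where m_ℓ = (1/(E_ℓ B_ℓ)) Σ_{e=1}^{E_ℓ} Σ_{b∈S_{ℓ,e}} g_ℓ(b), equals ((K−L)/(L(K−1))) · (1/K) Σ_{k=1}^K ‖a_k − ā‖² + (1/(KL)) Σ_{k=1}^K τ_{s,k} · (1/N_k) Σ_{n=1}^{N_k} ‖g_k(n) − a_k‖², where τ_{s,k} = (N_k − B_k)/((N_k − 1) B_k E_k). -/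

import Mathlib

/-!
Write agent `k`'s `E_k`-epoch mean as `a_k` plus a noise term. Batch tuples of different agents
(and batches of different epochs) are drawn independently and every noise term averages to zero,
so all cross terms vanish: for a fixed agent subset `S` the mean squared error is
`L⁻² ∑_{k ∈ S} Var_k` plus the squared bias `‖L⁻¹ ∑_{k ∈ S} a_k - ā‖²`. Both levels then rest on
one fact: the mean of a uniformly random `r`-subset of `n` points has variance
`(n - r) / (r (n - 1))` times the population variance, which follows by counting the `r`-subsets
that contain a given point or a given pair of points. Applied to a single batch, and divided by
`E_k` for the independent epochs, it gives `Var_k = τ_{s,k} (1/N_k) ∑_n ‖g_k(n) - a_k‖²`; applied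
to the agent subset `S` it gives the model-variability term.
-/

/-- The finset of all assignments, to each agent `k`, of a tuple of `E k` mini-batches,
each a `B k`-element subset of `{1,…,N k}`. -/
def allBatchTuples (K : ℕ) (N E B : Fin K → ℕ) :
    Finset ((k : Fin K) → Fin (E k) → Finset (Fin (N k))) :=
  Finset.univ.filter fun t => ∀ k e, (t k e).card = B k

open Finset
open Fintype (piFinset mem_piFinset)

theorem norm_sum_sq_eq_sum_product_inner {ι V : Type*} [NormedAddCommGroup V]
    [InnerProductSpace ℝ V] (s : Finset ι) (y : ι → V) :
    ‖∑ i ∈ s, y i‖ ^ 2 = ∑ p ∈ s ×ˢ s, inner ℝ (y p.1) (y p.2) := by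
  rw [← real_inner_self_eq_norm_sq, sum_inner, sum_product]
  simp only [inner_sum]

theorem sum_sum_mem_eq_sum_card_filter_smul {α β M : Type*} [Fintype β] [DecidableEq β]
    [AddCommMonoid M] (P : Finset α) (A : α → Finset β) (f : β → M) :
    ∑ a ∈ P, ∑ b ∈ A a, f b = ∑ b, #{a ∈ P | b ∈ A a} • f b := by
  rw [sum_comm' (t' := univ) (s' := fun b => {a ∈ P | b ∈ A a}) (by simp)]
  simp only [sum_const]

section PowersetCard

variable {ι : Type*} [Fintype ι] [DecidableEq ι]

-- Multiplied out so that no truncated subtraction occurs and no hypothesis `#T ≤ r` is needed.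
theorem card_filter_powersetCard_subset_mul_descFactorial (T : Finset ι) (r : ℕ) :
    #{s ∈ powersetCard r univ | T ⊆ s} * (Fintype.card ι).descFactorial #T
      = (Fintype.card ι).choose r * r.descFactorial #T := by
  by_cases hTr : #T ≤ r
  · rw [card_filter_powersetCard_subset T univ r (subset_univ T) hTr, card_univ,
      Nat.descFactorial_eq_factorial_mul_choose, Nat.descFactorial_eq_factorial_mul_choose]
    linear_combination T.card.factorial * (@Nat.choose_mul (Fintype.card ι) r T.card hTr).symm
  · have hempty : {s ∈ powersetCard r (univ : Finset ι) | T ⊆ s} = ∅ :=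
      filter_false_of_mem fun s hs hTs =>
        hTr ((card_le_card hTs).trans (mem_powersetCard_univ.1 hs).le)
    rw [hempty, Nat.descFactorial_eq_zero_iff_lt.2 (not_le.1 hTr), card_empty, zero_mul,
      mul_zero]

theorem card_smul_sum_powersetCard_sum {M : Type*} [AddCommMonoid M] (r : ℕ) (f : ι → M) :
    Fintype.card ι • ∑ s ∈ powersetCard r univ, ∑ i ∈ s, f i
      = ((Fintype.card ι).choose r * r) • ∑ i, f i := by
  rw [sum_sum_mem_eq_sum_card_filter_smul, smul_sum, smul_sum]
  refine sum_congr rfl fun i _ => ?_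
  have h := card_filter_powersetCard_subset_mul_descFactorial {i} r
  simp only [card_singleton, Nat.descFactorial_one, singleton_subset_iff] at h
  rw [smul_smul, mul_comm, h]

-- The counts `C(n-1, r-1)` of `i = j` and `C(n-2, r-2)` of `i ≠ j` in one formula.
theorem card_filter_mem_and_mem_powersetCard (r : ℕ) (i j : ι) :
    (Fintype.card ι : ℝ) * (Fintype.card ι - 1) * #{s ∈ powersetCard r univ | i ∈ s ∧ j ∈ s}
      = (Fintype.card ι).choose r * r *
          ((r - 1) + if i = j then (Fintype.card ι - r : ℝ) else 0) := by
  obtain rfl | hij := eq_or_ne i j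
  · have h := card_filter_powersetCard_subset_mul_descFactorial {i} r
    simp only [card_singleton, Nat.descFactorial_one, singleton_subset_iff] at h
    have h' := congrArg (Nat.cast (R := ℝ)) h
    push_cast at h'
    simp only [and_self, if_true]
    linear_combination ((Fintype.card ι : ℝ) - 1) * h'
  · have h := congrArg (Nat.cast (R := ℝ))
      (card_filter_powersetCard_subset_mul_descFactorial {i, j} r)
    rw [card_pair hij, Nat.cast_mul, Nat.cast_mul, Nat.cast_descFactorial_two,
      Nat.cast_descFactorial_two] at h
    simp only [insert_subset_iff, singleton_subset_iff, hij, if_false, add_zero] at h ⊢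
    linear_combination h

variable {V : Type*} [NormedAddCommGroup V] [InnerProductSpace ℝ V]

theorem card_mul_sum_powersetCard_norm_sum_sq (r : ℕ) (y : ι → V) :
    (Fintype.card ι : ℝ) * (Fintype.card ι - 1) *
        ∑ s ∈ powersetCard r univ, ‖∑ i ∈ s, y i‖ ^ 2
      = (Fintype.card ι).choose r * r *
          ((r - 1) * ‖∑ i, y i‖ ^ 2 + (Fintype.card ι - r) * ∑ i, ‖y i‖ ^ 2) := by
  calc (Fintype.card ι : ℝ) * (Fintype.card ι - 1) *
        ∑ s ∈ powersetCard r univ, ‖∑ i ∈ s, y i‖ ^ 2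
      = ∑ i, ∑ j, (Fintype.card ι : ℝ) * (Fintype.card ι - 1) *
          #{s ∈ powersetCard r univ | i ∈ s ∧ j ∈ s} * inner ℝ (y i) (y j) := by
        simp only [norm_sum_sq_eq_sum_product_inner, sum_sum_mem_eq_sum_card_filter_smul,
          mem_product, Fintype.sum_prod_type, mul_sum, nsmul_eq_mul, mul_assoc]
    _ = ∑ i, ∑ j, (Fintype.card ι).choose r * r *
          ((r - 1) + if i = j then (Fintype.card ι - r : ℝ) else 0) * inner ℝ (y i) (y j) := by
        simp only [card_filter_mem_and_mem_powersetCard]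
    _ = (Fintype.card ι).choose r * r *
          ((r - 1) * ‖∑ i, y i‖ ^ 2 + (Fintype.card ι - r) * ∑ i, ‖y i‖ ^ 2) := by
        simp only [norm_sum_sq_eq_sum_product_inner, sum_product, mul_add, add_mul, mul_ite,
          ite_mul, mul_zero, zero_mul, sum_add_distrib, sum_ite_eq, mem_univ, if_true,
          real_inner_self_eq_norm_sq, mul_sum, mul_assoc]

theorem sum_powersetCard_sampleMean_sub_mean [Nonempty ι] {r : ℕ} (hr : r ≠ 0) (x : ι → V) :
    ∑ s ∈ powersetCard r univ,
        ((r : ℝ)⁻¹ • ∑ i ∈ s, x i - (Fintype.card ι : ℝ)⁻¹ • ∑ i, x i) = 0 := by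
  have hn : (Fintype.card ι : ℝ) ≠ 0 := Nat.cast_ne_zero.2 Fintype.card_ne_zero
  have hsum : ∑ s ∈ powersetCard r univ, ∑ i ∈ s, x i
      = (Fintype.card ι : ℝ)⁻¹ • ((Fintype.card ι).choose r * r : ℝ) • ∑ i, x i := by
    rw [eq_inv_smul_iff₀ hn]
    exact_mod_cast card_smul_sum_powersetCard_sum r x
  rw [sum_sub_distrib, ← smul_sum, hsum, sum_const, card_powersetCard, card_univ, smul_smul,
    smul_smul, ← Nat.cast_smul_eq_nsmul ℝ, smul_smul, sub_eq_zero]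
  congr 1
  field_simp

theorem sum_powersetCard_norm_sampleMean_sub_mean_sq [Nontrivial ι] {r : ℕ} (hr : r ≠ 0)
    (x : ι → V) :
    ∑ s ∈ powersetCard r univ,
        ‖(r : ℝ)⁻¹ • ∑ i ∈ s, x i - (Fintype.card ι : ℝ)⁻¹ • ∑ i, x i‖ ^ 2
      = (Fintype.card ι).choose r * ((Fintype.card ι - r) / ((Fintype.card ι - 1) * r) *
          ((Fintype.card ι : ℝ)⁻¹ * ∑ i, ‖x i - (Fintype.card ι : ℝ)⁻¹ • ∑ j, x j‖ ^ 2)) := by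
  set n := Fintype.card ι
  set xbar := (n : ℝ)⁻¹ • ∑ i, x i
  have hn : (n : ℝ) ≠ 0 := Nat.cast_ne_zero.2 Fintype.card_ne_zero
  have hn1 : (n : ℝ) - 1 ≠ 0 := sub_ne_zero.2 (by exact_mod_cast Fintype.one_lt_card.ne')
  have hr' : (r : ℝ) ≠ 0 := Nat.cast_ne_zero.2 hr
  have hcentred : ∑ i, (x i - xbar) = 0 := by
    rw [sum_sub_distrib, sum_const, card_univ, ← Nat.cast_smul_eq_nsmul ℝ, smul_inv_smul₀ hn,
      sub_self]
  have hshift : ∀ s ∈ powersetCard r univ,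
      (r : ℝ)⁻¹ • ∑ i ∈ s, x i - xbar = (r : ℝ)⁻¹ • ∑ i ∈ s, (x i - xbar) := by
    intro s hs
    rw [sum_sub_distrib, sum_const, mem_powersetCard_univ.1 hs, smul_sub,
      ← Nat.cast_smul_eq_nsmul ℝ, inv_smul_smul₀ hr']
  have hmoment := card_mul_sum_powersetCard_norm_sum_sq r fun i => x i - xbar
  rw [hcentred, norm_zero] at hmoment
  rw [sum_congr rfl fun s hs => by
      rw [hshift s hs, norm_smul, mul_pow, norm_inv, Real.norm_natCast], ← mul_sum]
  field_simp
  linear_combination hmoment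

end PowersetCard

section PiFinset

variable {ι : Type*} [Fintype ι] [DecidableEq ι] {δ : ι → Type*} [∀ i, DecidableEq (δ i)]
  (Ω : ∀ i, Finset (δ i))

theorem sum_piFinset_apply_of_sum_eq_card_smul {M : Type*} [AddCommMonoid M] (k : ι)
    {F : δ k → M} {c : M} (h : ∑ w ∈ Ω k, F w = #(Ω k) • c) :
    ∑ t ∈ piFinset Ω, F (t k) = #(piFinset Ω) • c := by
  rw [← sum_fiberwise_of_maps_to (g := fun t => t k) (t := Ω k) fun t ht => mem_piFinset.1 ht k]
  calc ∑ w ∈ Ω k, ∑ t ∈ piFinset Ω with t k = w, F (t k)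
      = ∑ w ∈ Ω k, (∏ j ∈ univ.erase k, #(Ω j)) • F w := by
        refine sum_congr rfl fun w hw => ?_
        rw [sum_congr rfl fun t ht => by rw [(mem_filter.1 ht).2], sum_const,
          Fintype.card_filter_piFinset_eq_of_mem Ω k hw]
    _ = #(piFinset Ω) • c := by
        rw [← smul_sum, h, smul_smul, prod_erase_mul _ _ (mem_univ k), Fintype.card_piFinset]

variable {V : Type*} [NormedAddCommGroup V] [InnerProductSpace ℝ V]

theorem sum_piFinset_inner_eq_zero {k j : ι} (hkj : k ≠ j) (Y : δ k → V) {Z : δ j → V}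
    (hZ : ∑ w ∈ Ω j, Z w = 0) :
    ∑ t ∈ piFinset Ω, inner ℝ (Y (t k)) (Z (t j)) = 0 := by
  rw [← sum_fiberwise_of_maps_to (g := fun t => t k) (t := Ω k) fun t ht => mem_piFinset.1 ht k]
  refine sum_eq_zero fun w hw => ?_
  have hfibre : ∑ t ∈ piFinset Ω with t k = w, Z (t j) = 0 := by
    rw [← Fintype.piFinset_update_singleton_eq_filter_piFinset_eq Ω k hw,
      ← smul_zero #(piFinset (Function.update Ω k {w}))]
    refine sum_piFinset_apply_of_sum_eq_card_smul _ j ?_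
    rw [Function.update_of_ne hkj.symm, hZ, smul_zero]
  rw [sum_congr rfl fun t ht => by rw [(mem_filter.1 ht).2], ← inner_sum, hfibre,
    inner_zero_right]

theorem sum_piFinset_norm_sum_sq (S : Finset ι) {Y : ∀ i, δ i → V}
    (hY : ∀ i ∈ S, ∑ w ∈ Ω i, Y i w = 0) :
    ∑ t ∈ piFinset Ω, ‖∑ i ∈ S, Y i (t i)‖ ^ 2 = ∑ i ∈ S, ∑ t ∈ piFinset Ω, ‖Y i (t i)‖ ^ 2 := by
  simp only [norm_sum_sq_eq_sum_product_inner]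
  rw [sum_comm, sum_product]
  refine sum_congr rfl fun i hi => ?_
  rw [sum_eq_single i (fun j hj hji => sum_piFinset_inner_eq_zero Ω hji.symm _ (hY j hj))
    fun hi' => absurd hi hi']
  simp only [real_inner_self_eq_norm_sq]

theorem sum_piFinset_norm_smul_sum_sub_sq {m : ∀ i, δ i → V} {a : ι → V} {σ : ι → ℝ}
    (hmean : ∀ i, ∑ w ∈ Ω i, (m i w - a i) = 0)
    (hvar : ∀ i, ∑ w ∈ Ω i, ‖m i w - a i‖ ^ 2 = #(Ω i) * σ i) (S : Finset ι) (c : ℝ) (u : V) :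
    ∑ t ∈ piFinset Ω, ‖c • ∑ i ∈ S, m i (t i) - u‖ ^ 2
      = #(piFinset Ω) * (c ^ 2 * ∑ i ∈ S, σ i + ‖c • ∑ i ∈ S, a i - u‖ ^ 2) := by
  have hsplit : ∀ t : ∀ i, δ i, c • ∑ i ∈ S, m i (t i) - u
      = ∑ i ∈ S, c • (m i (t i) - a i) + (c • ∑ i ∈ S, a i - u) := by
    intro t
    rw [← smul_sum, sum_sub_distrib, smul_sub]
    abel
  set bias := c • ∑ i ∈ S, a i - u
  have hcross : ∑ t ∈ piFinset Ω, inner ℝ (∑ i ∈ S, c • (m i (t i) - a i)) bias = 0 := by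
    simp only [sum_inner]
    rw [sum_comm]
    refine sum_eq_zero fun i _ => ?_
    rw [← smul_zero #(piFinset Ω)]
    refine sum_piFinset_apply_of_sum_eq_card_smul Ω i
      (F := fun w => inner ℝ (c • (m i w - a i)) bias) ?_
    rw [← sum_inner, ← smul_sum, hmean, smul_zero, inner_zero_left, smul_zero]
  have hnoise : ∑ t ∈ piFinset Ω, ‖∑ i ∈ S, c • (m i (t i) - a i)‖ ^ 2
      = #(piFinset Ω) * (c ^ 2 * ∑ i ∈ S, σ i) := by
    rw [sum_piFinset_norm_sum_sq Ω S (Y := fun i w => c • (m i w - a i))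
      fun i _ => by rw [← smul_sum, hmean, smul_zero], mul_sum, mul_sum]
    refine sum_congr rfl fun i _ => ?_
    rw [← nsmul_eq_mul]
    refine sum_piFinset_apply_of_sum_eq_card_smul Ω i
      (F := fun w => ‖c • (m i w - a i)‖ ^ 2) ?_
    simp only [norm_smul, mul_pow, Real.norm_eq_abs, sq_abs, ← mul_sum, hvar, nsmul_eq_mul]
    ring
  simp only [hsplit, norm_add_sq_real, sum_add_distrib, sum_const, nsmul_eq_mul, ← mul_sum]
  rw [hnoise, hcross]
  ring

end PiFinset

section Epochs

variable {ι κ V : Type*} [Fintype κ] [NormedAddCommGroup V] [InnerProductSpace ℝ V]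

theorem inv_mul_smul_sum_sum_sub [Nonempty κ] (r : ℕ) (x : ι → V) (z : V) (w : κ → Finset ι) :
    ((Fintype.card κ : ℝ) * r)⁻¹ • ∑ e, ∑ b ∈ w e, x b - z
      = (Fintype.card κ : ℝ)⁻¹ • ∑ e, ((r : ℝ)⁻¹ • ∑ b ∈ w e, x b - z) := by
  have hc : (Fintype.card κ : ℝ) ≠ 0 := Nat.cast_ne_zero.2 Fintype.card_ne_zero
  rw [sum_sub_distrib, smul_sub, sum_const, card_univ, ← Nat.cast_smul_eq_nsmul ℝ,
    inv_smul_smul₀ hc, ← smul_sum, smul_smul, mul_inv]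

variable [Fintype ι] [DecidableEq ι] [DecidableEq κ]

theorem sum_piFinset_epochMean_sub_mean [Nonempty ι] [Nonempty κ] {r : ℕ} (hr : r ≠ 0)
    (x : ι → V) :
    ∑ w ∈ piFinset fun _ : κ => powersetCard r (univ : Finset ι),
        (((Fintype.card κ : ℝ) * r)⁻¹ • ∑ e, ∑ b ∈ w e, x b - (Fintype.card ι : ℝ)⁻¹ • ∑ i, x i)
      = 0 := by
  simp only [inv_mul_smul_sum_sum_sub, ← smul_sum]
  rw [sum_comm, sum_eq_zero, smul_zero]
  intro e _
  rw [← smul_zero #(piFinset fun _ : κ => powersetCard r (univ : Finset ι))]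
  refine sum_piFinset_apply_of_sum_eq_card_smul (fun _ : κ => powersetCard r (univ : Finset ι)) e
    (F := fun s : Finset ι => (r : ℝ)⁻¹ • ∑ b ∈ s, x b - (Fintype.card ι : ℝ)⁻¹ • ∑ i, x i) ?_
  rw [sum_powersetCard_sampleMean_sub_mean hr, smul_zero]

theorem sum_piFinset_norm_epochMean_sub_mean_sq [Nontrivial ι] [Nonempty κ] {r : ℕ}
    (hr : r ≠ 0) (x : ι → V) :
    ∑ w ∈ piFinset fun _ : κ => powersetCard r (univ : Finset ι),
        ‖((Fintype.card κ : ℝ) * r)⁻¹ • ∑ e, ∑ b ∈ w e, x b -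
          (Fintype.card ι : ℝ)⁻¹ • ∑ i, x i‖ ^ 2
      = #(piFinset fun _ : κ => powersetCard r (univ : Finset ι)) *
          ((Fintype.card ι - r) / ((Fintype.card ι - 1) * r * Fintype.card κ) *
            ((Fintype.card ι : ℝ)⁻¹ * ∑ i, ‖x i - (Fintype.card ι : ℝ)⁻¹ • ∑ j, x j‖ ^ 2)) := by
  set P := powersetCard r (univ : Finset ι)
  set Z : Finset ι → V := fun s => (r : ℝ)⁻¹ • ∑ b ∈ s, x b - (Fintype.card ι : ℝ)⁻¹ • ∑ i, x i
  have hc : (Fintype.card κ : ℝ) ≠ 0 := Nat.cast_ne_zero.2 Fintype.card_ne_zero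
  have hepoch : ∀ e : κ, ∑ w ∈ piFinset fun _ : κ => P, ‖Z (w e)‖ ^ 2
      = #(piFinset fun _ : κ => P) * ((Fintype.card ι - r) / ((Fintype.card ι - 1) * r) *
          ((Fintype.card ι : ℝ)⁻¹ * ∑ i, ‖x i - (Fintype.card ι : ℝ)⁻¹ • ∑ j, x j‖ ^ 2)) := by
    intro e
    rw [← nsmul_eq_mul]
    refine sum_piFinset_apply_of_sum_eq_card_smul (fun _ : κ => P) e (F := fun s => ‖Z s‖ ^ 2) ?_
    rw [sum_powersetCard_norm_sampleMean_sub_mean_sq hr, nsmul_eq_mul, card_powersetCard,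
      card_univ]
  simp only [inv_mul_smul_sum_sum_sub, norm_smul, mul_pow, norm_inv, Real.norm_natCast, ← mul_sum]
  rw [sum_piFinset_norm_sum_sq (fun _ : κ => P) univ (Y := fun _ => Z)
      fun _ _ => sum_powersetCard_sampleMean_sub_mean hr x, sum_congr rfl fun e _ => hepoch e,
    sum_const, card_univ, nsmul_eq_mul]
  field_simp

end Epochs

/-- two-level variance decomposition of the gradient noise: the two-level
average — uniform over agent subsets `S` of cardinality `L` and, independently for each `k`,
uniform over the tuples of `E k` batches of size `B k` from `{1,…,N k}` — of
`‖(1/L) ∑_{ℓ∈S} m_ℓ − ā‖²`, where `m_ℓ` is the `E_ℓ`-epoch mini-batch mean of `g_ℓ`,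
equals the agent-sampling (model-variability) term plus the mini-batch (data-variability)
term with factors `(K−L)/(L(K−1))` and `τ_{s,k} = (N_k − B_k)/((N_k−1) B_k E_k)`. -/
theorem gradient_noise_variance_decomposition {M K L : ℕ} (hK : 2 ≤ K) (hL1 : 1 ≤ L)
    (hLK : L ≤ K) (N E B : Fin K → ℕ) (hN : ∀ k, 2 ≤ N k) (hE : ∀ k, 1 ≤ E k)
    (hB1 : ∀ k, 1 ≤ B k) (hBN : ∀ k, B k ≤ N k)
    (g : (k : Fin K) → Fin (N k) → EuclideanSpace ℝ (Fin M)) :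
    ((K.choose L : ℝ))⁻¹ * (((allBatchTuples K N E B).card : ℝ))⁻¹ *
        ∑ S ∈ Finset.powersetCard L (Finset.univ : Finset (Fin K)),
          ∑ t ∈ allBatchTuples K N E B,
            ‖(L : ℝ)⁻¹ • (∑ ℓ ∈ S, ((E ℓ : ℝ) * (B ℓ : ℝ))⁻¹ • ∑ e, ∑ b ∈ t ℓ e, g ℓ b)
              - (K : ℝ)⁻¹ • ∑ k, (N k : ℝ)⁻¹ • ∑ n, g k n‖ ^ 2
      = ((K : ℝ) - (L : ℝ)) / ((L : ℝ) * ((K : ℝ) - 1)) *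
          ((K : ℝ)⁻¹ * ∑ k,
            ‖(N k : ℝ)⁻¹ • (∑ n, g k n) - (K : ℝ)⁻¹ • ∑ j, (N j : ℝ)⁻¹ • ∑ n, g j n‖ ^ 2)
        + ((K : ℝ) * (L : ℝ))⁻¹ *
            ∑ k, ((N k : ℝ) - (B k : ℝ)) / (((N k : ℝ) - 1) * (B k : ℝ) * (E k : ℝ)) *
              ((N k : ℝ)⁻¹ * ∑ n, ‖g k n - (N k : ℝ)⁻¹ • ∑ m, g k m‖ ^ 2) := by
  have : ∀ k, Nonempty (Fin (E k)) := fun k => ⟨⟨0, hE k⟩⟩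
  have : ∀ k, Nontrivial (Fin (N k)) := fun k => Fin.nontrivial_iff_two_le.2 (hN k)
  have : Nontrivial (Fin K) := Fin.nontrivial_iff_two_le.2 hK
  set Ω : ∀ k, Finset (Fin (E k) → Finset (Fin (N k))) :=
    fun k => piFinset fun _ => powersetCard (B k) univ
  have hT : allBatchTuples K N E B = piFinset Ω := by
    ext t
    simp [allBatchTuples, Ω, mem_piFinset]
  have hTcard : (#(piFinset Ω) : ℝ) ≠ 0 := by
    refine Nat.cast_ne_zero.2 (card_pos.2 (Fintype.piFinset_nonempty.2 fun k => ?_)).ne'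
    exact Fintype.piFinset_nonempty.2 fun _ => powersetCard_nonempty.2 (by simpa using hBN k)
  have hmean (k : Fin K) := sum_piFinset_epochMean_sub_mean (κ := Fin (E k))
    (Nat.one_le_iff_ne_zero.1 (hB1 k)) (g k)
  have hvar (k : Fin K) := sum_piFinset_norm_epochMean_sub_mean_sq (κ := Fin (E k))
    (Nat.one_le_iff_ne_zero.1 (hB1 k)) (g k)
  have hsample := sum_powersetCard_norm_sampleMean_sub_mean_sq (Nat.one_le_iff_ne_zero.1 hL1)
    fun k : Fin K => (N k : ℝ)⁻¹ • ∑ n, g k n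
  have hcount := card_smul_sum_powersetCard_sum L fun k : Fin K =>
    ((N k : ℝ) - B k) / ((N k - 1) * B k * E k) *
      ((N k : ℝ)⁻¹ * ∑ n, ‖g k n - (N k : ℝ)⁻¹ • ∑ m, g k m‖ ^ 2)
  simp only [Fintype.card_fin, nsmul_eq_mul, Nat.cast_mul] at hmean hvar hsample hcount
  have hC : (K.choose L : ℝ) ≠ 0 := Nat.cast_ne_zero.2 (Nat.choose_pos hLK).ne'
  rw [hT, sum_congr rfl fun S _ => sum_piFinset_norm_smul_sum_sub_sq Ω hmean hvar S _ _,
    ← mul_sum, sum_add_distrib, ← mul_sum, hsample, mul_assoc, inv_mul_cancel_left₀ hTcard,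
    (eq_inv_mul_iff_mul_eq₀ (by positivity)).2 hcount]
  field_simp
  ring
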